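/- arXiv:1304.8126 — 2 statements merged into one kernel-verified Lean document; each statement's English description precedes it below -/
import Mathlib

section
/- Let X ∈ ℂ^{n1×n2} be the data matrix of the 2-D spectral model with r frequency pairs, and let X_e be its two-fold Hankel enhanced form with pencil parameters k1, k2. Then X_e admits the factorization X_e = √(k1·k2·(n1−k1+1)·(n2−k2+1)) · E_L · D · E_R, where D = diag(d_1,…,d_r), and consequently rank(X_e) ≤ r. -/
open scoped Classical
open Matrix

noncomputable section

namespace EMaC

/-- `e^{2π i f}` -/
def efreq (f : ℝ) : ℂ := Complex.exp (2 * Real.pi * Complex.I * (f : ℂ))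

/-- The data matrix of the 2-D spectral model:
`X_{k,l} = Σ_i d_i y_i^k z_i^l` with `y_i = e^{2πi f1 i}`, `z_i = e^{2πi f2 i}`. -/
def dataMatrix (n1 n2 r : ℕ) (d : Fin r → ℂ) (f1 f2 : Fin r → ℝ) :
    Matrix (Fin n1) (Fin n2) ℂ :=
  Matrix.of fun k l => ∑ i : Fin r, d i * efreq (f1 i) ^ (k : ℕ) * efreq (f2 i) ^ (l : ℕ)

/-- Frequencies lie in `[0,1)²` and the `r` frequency pairs are distinct. -/
structure SpectralModel (r : ℕ) (f1 f2 : Fin r → ℝ) : Prop where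
  f1_mem : ∀ i, f1 i ∈ Set.Ico (0 : ℝ) 1
  f2_mem : ∀ i, f2 i ∈ Set.Ico (0 : ℝ) 1
  distinct : Function.Injective fun i => (f1 i, f2 i)

/-- The two-fold Hankel enhanced form of an `n1 × n2` matrix, with pencil
parameters `k1, k2`. -/
def enhance {n1 n2 : ℕ} (k1 k2 : ℕ) (hk1 : k1 ≤ n1) (hk2 : k2 ≤ n2)
    (M : Matrix (Fin n1) (Fin n2) ℂ) :
    Matrix (Fin k1 × Fin k2) (Fin (n1 - k1 + 1) × Fin (n2 - k2 + 1)) ℂ :=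
  Matrix.of fun ip jq =>
    M ⟨ip.1.1 + jq.1.1, by have h1 := ip.1.isLt; have h2 := jq.1.isLt; omega⟩
      ⟨ip.2.1 + jq.2.1, by have h1 := ip.2.isLt; have h2 := jq.2.isLt; omega⟩

/-- The matrix `E_L`. -/
def EL (r k1 k2 : ℕ) (f1 f2 : Fin r → ℝ) : Matrix (Fin k1 × Fin k2) (Fin r) ℂ :=
  Matrix.of fun ip s =>
    efreq (f1 s) ^ (ip.1 : ℕ) * efreq (f2 s) ^ (ip.2 : ℕ) /
      (Real.sqrt ((k1 : ℝ) * k2) : ℂ)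

/-- The matrix `E_R`. -/
def ER (n1 n2 r k1 k2 : ℕ) (f1 f2 : Fin r → ℝ) :
    Matrix (Fin r) (Fin (n1 - k1 + 1) × Fin (n2 - k2 + 1)) ℂ :=
  Matrix.of fun s jq =>
    efreq (f1 s) ^ (jq.1 : ℕ) * efreq (f2 s) ^ (jq.2 : ℕ) /
      (Real.sqrt (((n1 - k1 + 1 : ℕ) : ℝ) * ((n2 - k2 + 1 : ℕ) : ℝ)) : ℂ)

/-- Smallest singular value of a square complex matrix. -/
def sigmaMin {n : Type*} [Fintype n] [DecidableEq n] (M : Matrix n n ℂ) : ℝ :=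
  ⨅ i, Real.sqrt ((Matrix.isHermitian_conjTranspose_mul_self M).eigenvalues i)

/-- The incoherence property with parameter `μ1`:
`σ_min(G_L) ≥ 1/μ1` and `σ_min(G_R) ≥ 1/μ1`, where `G_L = E_L* E_L` and
`G_R = (E_R E_R*)ᵀ`. -/
def Incoherent (n1 n2 r k1 k2 : ℕ) (f1 f2 : Fin r → ℝ) (μ1 : ℝ) : Prop :=
  1 / μ1 ≤ sigmaMin ((EL r k1 k2 f1 f2)ᴴ * EL r k1 k2 f1 f2) ∧
    1 / μ1 ≤ sigmaMin ((ER n1 n2 r k1 k2 f1 f2 * (ER n1 n2 r k1 k2 f1 f2)ᴴ)ᵀ)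

/-- `c_s = max{n1 n2/(k1 k2), n1 n2/((n1-k1+1)(n2-k2+1))}`. -/
def cs (n1 n2 k1 k2 : ℕ) : ℝ :=
  max (((n1 : ℝ) * n2) / ((k1 : ℝ) * k2))
    (((n1 : ℝ) * n2) / (((n1 - k1 + 1 : ℕ) : ℝ) * ((n2 - k2 + 1 : ℕ) : ℝ)))

/-- Nuclear norm: sum of singular values. -/
def nuclearNorm {p q : Type*} [Fintype p] [Fintype q] [DecidableEq q]
    (M : Matrix p q ℂ) : ℝ :=
  ∑ i, Real.sqrt ((Matrix.isHermitian_conjTranspose_mul_self M).eigenvalues i)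

/-- Spectral norm: largest singular value. -/
def specNorm {p q : Type*} [Fintype p] [Fintype q] [DecidableEq q]
    (M : Matrix p q ℂ) : ℝ :=
  ⨆ i, Real.sqrt ((Matrix.isHermitian_conjTranspose_mul_self M).eigenvalues i)

/-- Frobenius norm. -/
def frob {p q : Type*} [Fintype p] [Fintype q] (M : Matrix p q ℂ) : ℝ :=
  Real.sqrt (∑ i, ∑ j, ‖M i j‖ ^ 2)

/-- Frobenius inner product `⟨P,Q⟩ = Tr(P* Q)`. -/
def finner {p q : Type*} [Fintype p] [Fintype q] (P Q : Matrix p q ℂ) : ℂ :=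
  ∑ i, ∑ j, (starRingEnd ℂ) (P i j) * Q i j

/-- Elementwise ℓ1 norm. -/
def l1norm {p q : Type*} [Fintype p] [Fintype q] (M : Matrix p q ℂ) : ℝ :=
  ∑ i, ∑ j, ‖M i j‖

/-- `P_Ω`: keep entries on `Ω`, zero elsewhere. -/
def projOmega {n1 n2 : ℕ} (Ω : Finset (Fin n1 × Fin n2))
    (M : Matrix (Fin n1) (Fin n2) ℂ) : Matrix (Fin n1) (Fin n2) ℂ :=
  Matrix.of fun k l => if (k, l) ∈ Ω then M k l else 0

/-- `ω_{k,l} = |Ω_e(k,l)|`. -/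
def wcount (n1 n2 k1 k2 : ℕ) (a : Fin n1 × Fin n2) : ℕ :=
  (Finset.univ.filter fun e : (Fin k1 × Fin k2) × (Fin (n1 - k1 + 1) × Fin (n2 - k2 + 1)) =>
    e.1.1.1 + e.2.1.1 = (a.1 : ℕ) ∧ e.1.2.1 + e.2.2.1 = (a.2 : ℕ)).card

/-- The basis matrix `A_{(k,l)}`: `1/√ω_{k,l}` on `Ω_e(k,l)` and `0` elsewhere. -/
def Amat (n1 n2 k1 k2 : ℕ) (a : Fin n1 × Fin n2) :
    Matrix (Fin k1 × Fin k2) (Fin (n1 - k1 + 1) × Fin (n2 - k2 + 1)) ℂ :=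
  Matrix.of fun ip jq =>
    if ip.1.1 + jq.1.1 = (a.1 : ℕ) ∧ ip.2.1 + jq.2.1 = (a.2 : ℕ) then
      (((Real.sqrt (wcount n1 n2 k1 k2 a))⁻¹ : ℝ) : ℂ) else 0

/-- `A_a(M) = ⟨A_a, M⟩ A_a`. -/
def AopS (n1 n2 k1 k2 : ℕ) (a : Fin n1 × Fin n2)
    (M : Matrix (Fin k1 × Fin k2) (Fin (n1 - k1 + 1) × Fin (n2 - k2 + 1)) ℂ) :
    Matrix (Fin k1 × Fin k2) (Fin (n1 - k1 + 1) × Fin (n2 - k2 + 1)) ℂ :=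
  finner (Amat n1 n2 k1 k2 a) M • Amat n1 n2 k1 k2 a

/-- `A = Σ_{(k,l)} A_{(k,l)}`: the projection onto the span of the `A_{(k,l)}`. -/
def Aproj (n1 n2 k1 k2 : ℕ)
    (M : Matrix (Fin k1 × Fin k2) (Fin (n1 - k1 + 1) × Fin (n2 - k2 + 1)) ℂ) :
    Matrix (Fin k1 × Fin k2) (Fin (n1 - k1 + 1) × Fin (n2 - k2 + 1)) ℂ :=
  ∑ a : Fin n1 × Fin n2, AopS n1 n2 k1 k2 a M

/-- `Σ_{a ∈ s} A_a` over a (finite) set `s` of distinct indices. -/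
def AprojSet (n1 n2 k1 k2 : ℕ) (s : Finset (Fin n1 × Fin n2))
    (M : Matrix (Fin k1 × Fin k2) (Fin (n1 - k1 + 1) × Fin (n2 - k2 + 1)) ℂ) :
    Matrix (Fin k1 × Fin k2) (Fin (n1 - k1 + 1) × Fin (n2 - k2 + 1)) ℂ :=
  ∑ a ∈ s, AopS n1 n2 k1 k2 a M

/-- `A_Ω = Σ_{i} A_{a_i}` (with multiplicity) for a multiset of samples given
as a tuple `a : Fin m → Fin n1 × Fin n2`. -/
def AopTuple (n1 n2 k1 k2 m : ℕ) (a : Fin m → Fin n1 × Fin n2)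
    (M : Matrix (Fin k1 × Fin k2) (Fin (n1 - k1 + 1) × Fin (n2 - k2 + 1)) ℂ) :
    Matrix (Fin k1 × Fin k2) (Fin (n1 - k1 + 1) × Fin (n2 - k2 + 1)) ℂ :=
  ∑ i : Fin m, AopS n1 n2 k1 k2 (a i) M

/-- `P_T(M) = U U* M + M V V* − U U* M V V*`, the projection onto the
tangent space `T = {U M* + M̃ V*}`. -/
def projT {p q : Type*} [Fintype p] [Fintype q] {r' : ℕ}
    (U : Matrix p (Fin r') ℂ) (V : Matrix q (Fin r') ℂ) (M : Matrix p q ℂ) :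
    Matrix p q ℂ :=
  U * Uᴴ * M + M * (V * Vᴴ) - U * Uᴴ * M * (V * Vᴴ)

/-- `X_e = U Λ V*` is a compact SVD with positive singular values `σ`. -/
structure CompactSVD {p q : Type*} [Fintype p] [Fintype q] {r' : ℕ}
    (Xe : Matrix p q ℂ) (U : Matrix p (Fin r') ℂ) (σ : Fin r' → ℝ)
    (V : Matrix q (Fin r') ℂ) : Prop where
  U_orth : Uᴴ * U = 1
  V_orth : Vᴴ * V = 1
  sigma_pos : ∀ i, 0 < σ i
  decomp : Xe = U * Matrix.diagonal (fun i => ((σ i : ℝ) : ℂ)) * Vᴴ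

/-- `‖M‖_{A,2}²`. -/
def Anorm2sq (n1 n2 k1 k2 : ℕ)
    (M : Matrix (Fin k1 × Fin k2) (Fin (n1 - k1 + 1) × Fin (n2 - k2 + 1)) ℂ) : ℝ :=
  ∑ a : Fin n1 × Fin n2, ‖finner (Amat n1 n2 k1 k2 a) M‖ ^ 2 / (wcount n1 n2 k1 k2 a : ℝ)

/-- `‖M‖_{A,∞}`. -/
def AnormInf (n1 n2 k1 k2 : ℕ)
    (M : Matrix (Fin k1 × Fin k2) (Fin (n1 - k1 + 1) × Fin (n2 - k2 + 1)) ℂ) : ℝ :=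
  ⨆ a : Fin n1 × Fin n2,
    ‖finner (Amat n1 n2 k1 k2 a) M‖ / Real.sqrt (wcount n1 n2 k1 k2 a)

/-- Complex sign. -/
def csgn (z : ℂ) : ℂ := if z = 0 then 0 else z / (‖z‖ : ℂ)

/-- Entrywise complex sign of a matrix. -/
def matSgn {p q : Type*} (M : Matrix p q ℂ) : Matrix p q ℂ :=
  Matrix.of fun i j => csgn (M i j)

end EMaC

namespace EMaC

/-- The set of distinct sample locations of the sample tuple (multiset) `a`. -/
def sampleSet {n1 n2 m : ℕ} (a : Fin m → Fin n1 × Fin n2) : Finset (Fin n1 × Fin n2) :=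
  Finset.image a Finset.univ

/-- The set of distinct locations among the first `mclean` samples of `a`. -/
def cleanSet {n1 n2 m : ℕ} (mclean : ℕ) (a : Fin m → Fin n1 × Fin n2) :
    Finset (Fin n1 × Fin n2) :=
  Finset.image a (Finset.univ.filter fun i => (i : ℕ) < mclean)

/-- `Ω^dirty`: distinct locations of `a` not among the first `mclean` (clean) samples. -/
def dirtySet {n1 n2 m : ℕ} (mclean : ℕ) (a : Fin m → Fin n1 × Fin n2) :
    Finset (Fin n1 × Fin n2) :=
  sampleSet a \ cleanSet mclean a

/-- `A_{Ω^clean}` (with multiplicity): sum over the first `mclean` samples. -/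
def AopClean (n1 n2 k1 k2 m mclean : ℕ) (a : Fin m → Fin n1 × Fin n2)
    (M : Matrix (Fin k1 × Fin k2) (Fin (n1 - k1 + 1) × Fin (n2 - k2 + 1)) ℂ) :
    Matrix (Fin k1 × Fin k2) (Fin (n1 - k1 + 1) × Fin (n2 - k2 + 1)) ℂ :=
  ∑ i ∈ Finset.univ.filter (fun i : Fin m => (i : ℕ) < mclean), AopS n1 n2 k1 k2 (a i) M

/-- The Robust-EMaC objective `‖M_e‖_* + λ ‖Ŝ_e‖_1`. -/
def robustObj (n1 n2 k1 k2 : ℕ) (hk1' : k1 ≤ n1) (hk2' : k2 ≤ n2) (lam : ℝ)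
    (M S : Matrix (Fin n1) (Fin n2) ℂ) : ℝ :=
  nuclearNorm (enhance k1 k2 hk1' hk2' M) + lam * l1norm (enhance k1 k2 hk1' hk2' S)

/-- `(M̂, Ŝ)` is a minimizer of Robust-EMaC with observations `P_Ω(X + S)`. -/
def RobustMinimizer (n1 n2 k1 k2 : ℕ) (hk1' : k1 ≤ n1) (hk2' : k2 ≤ n2) (lam : ℝ)
    (Ω : Finset (Fin n1 × Fin n2)) (X S Mhat Shat : Matrix (Fin n1) (Fin n2) ℂ) : Prop :=
  projOmega Ω (Mhat + Shat) = projOmega Ω (X + S) ∧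
    ∀ M' S' : Matrix (Fin n1) (Fin n2) ℂ,
      projOmega Ω (M' + S') = projOmega Ω (X + S) →
      robustObj n1 n2 k1 k2 hk1' hk2' lam Mhat Shat ≤
        robustObj n1 n2 k1 k2 hk1' hk2' lam M' S'

/-- `X` is the unique solution of the EMaC program with observed entries `Ω`:
every feasible `M` is either `X` itself or has strictly larger enhanced
nuclear norm. -/
def UniqueEMaCSolution (n1 n2 k1 k2 : ℕ) (hk1' : k1 ≤ n1) (hk2' : k2 ≤ n2)
    (Ω : Finset (Fin n1 × Fin n2)) (X : Matrix (Fin n1) (Fin n2) ℂ) : Prop :=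
  ∀ M : Matrix (Fin n1) (Fin n2) ℂ,
    (∀ e ∈ Ω, M e.1 e.2 = X e.1 e.2) →
    M = X ∨
      nuclearNorm (enhance k1 k2 hk1' hk2' X) < nuclearNorm (enhance k1 k2 hk1' hk2' M)

/-- `sgn(S)` in the random-sign outlier model: the random sign `K` on `Ω^dirty`
and zero elsewhere. -/
def dirtySign {n1 n2 m : ℕ} (mclean : ℕ) (a : Fin m → Fin n1 × Fin n2)
    (K : Fin n1 × Fin n2 → ℂ) : Matrix (Fin n1) (Fin n2) ℂ :=
  Matrix.of fun α β => if (α, β) ∈ dirtySet mclean a then K (α, β) else 0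

end EMaC

/-! Since `y^(i+j) z^(p+q) = (y^i z^p) (y^j z^q)`, the two-fold Hankel matrix of `X` is
`V_L D V_Rᵀ` for the two-dimensional Vandermonde matrices `V_L`, `V_R` of the nodes `(y_s, z_s)`,
of which `E_L` and `E_R` are rescalings. A product through `r` columns has rank at most `r`. -/

namespace EMaC

def vandermonde₂ {ι R : Type*} [Monoid R] (m₁ m₂ : ℕ) (y z : ι → R) :
    Matrix (Fin m₁ × Fin m₂) ι R :=
  Matrix.of fun ip s => y s ^ (ip.1 : ℕ) * z s ^ (ip.2 : ℕ)

theorem vandermonde₂_mul_diagonal_mul_transpose_apply {ι R : Type*} [Fintype ι]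
    [DecidableEq ι] [CommSemiring R] {m₁ m₂ l₁ l₂ : ℕ} (y z d : ι → R)
    (ip : Fin m₁ × Fin m₂) (jq : Fin l₁ × Fin l₂) :
    (vandermonde₂ m₁ m₂ y z * diagonal d * (vandermonde₂ l₁ l₂ y z)ᵀ) ip jq =
      ∑ s, d s * y s ^ (ip.1 + jq.1 : ℕ) * z s ^ (ip.2 + jq.2 : ℕ) := by
  rw [mul_apply]
  simp only [mul_diagonal, transpose_apply, vandermonde₂, of_apply]
  refine Finset.sum_congr rfl fun s _ => ?_
  ring

theorem enhance_dataMatrix {n1 n2 r : ℕ} (k1 k2 : ℕ) (hk1 : k1 ≤ n1) (hk2 : k2 ≤ n2)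
    (d : Fin r → ℂ) (f1 f2 : Fin r → ℝ) :
    enhance k1 k2 hk1 hk2 (dataMatrix n1 n2 r d f1 f2) =
      vandermonde₂ k1 k2 (efreq ∘ f1) (efreq ∘ f2) * diagonal d *
        (vandermonde₂ (n1 - k1 + 1) (n2 - k2 + 1) (efreq ∘ f1) (efreq ∘ f2))ᵀ := by
  ext ip jq
  rw [vandermonde₂_mul_diagonal_mul_transpose_apply]
  rfl

theorem ofReal_sqrt_mul_mul_inv_sqrt_mul_inv_sqrt {a b : ℝ} (ha : 0 < a) (hb : 0 < b) :
    (Real.sqrt (a * b) : ℂ) * (Real.sqrt a : ℂ)⁻¹ * (Real.sqrt b : ℂ)⁻¹ = 1 := by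
  have hsa : (Real.sqrt a : ℂ) ≠ 0 := Complex.ofReal_ne_zero.2 (Real.sqrt_pos.2 ha).ne'
  have hsb : (Real.sqrt b : ℂ) ≠ 0 := Complex.ofReal_ne_zero.2 (Real.sqrt_pos.2 hb).ne'
  rw [Real.sqrt_mul ha.le, Complex.ofReal_mul]
  field_simp

theorem EL_eq_smul_vandermonde₂ (r k1 k2 : ℕ) (f1 f2 : Fin r → ℝ) :
    EL r k1 k2 f1 f2 =
      ((Real.sqrt ((k1 : ℝ) * k2))⁻¹ : ℂ) • vandermonde₂ k1 k2 (efreq ∘ f1) (efreq ∘ f2) := by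
  ext ip s
  simp [EL, vandermonde₂, div_eq_inv_mul]

theorem ER_eq_smul_vandermonde₂_transpose (n1 n2 r k1 k2 : ℕ) (f1 f2 : Fin r → ℝ) :
    ER n1 n2 r k1 k2 f1 f2 =
      ((Real.sqrt (((n1 - k1 + 1 : ℕ) : ℝ) * ((n2 - k2 + 1 : ℕ) : ℝ)))⁻¹ : ℂ) •
        (vandermonde₂ (n1 - k1 + 1) (n2 - k2 + 1) (efreq ∘ f1) (efreq ∘ f2))ᵀ := by
  ext s jq
  simp [ER, vandermonde₂, div_eq_inv_mul]

end EMaC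

open EMaC in
theorem enhanced_matrix_factorization_and_rank_general
    (n1 n2 r k1 k2 : ℕ)
    (hk1 : 1 ≤ k1) (hk1' : k1 ≤ n1) (hk2 : 1 ≤ k2) (hk2' : k2 ≤ n2)
    (d : Fin r → ℂ) (f1 f2 : Fin r → ℝ) :
    enhance k1 k2 hk1' hk2' (dataMatrix n1 n2 r d f1 f2) =
      (Real.sqrt (((k1 : ℝ) * k2) *
          (((n1 - k1 + 1 : ℕ) : ℝ) * ((n2 - k2 + 1 : ℕ) : ℝ))) : ℂ) •
        (EL r k1 k2 f1 f2 * Matrix.diagonal d * ER n1 n2 r k1 k2 f1 f2) ∧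
    (enhance k1 k2 hk1' hk2' (dataMatrix n1 n2 r d f1 f2)).rank ≤ r := by
  have hk1k2 : (0 : ℝ) < (k1 : ℝ) * k2 := by positivity
  refine ⟨?_, ?_⟩
  · rw [enhance_dataMatrix, EL_eq_smul_vandermonde₂, ER_eq_smul_vandermonde₂_transpose,
      Matrix.smul_mul, Matrix.smul_mul, Matrix.mul_smul, smul_smul, smul_smul,
      ofReal_sqrt_mul_mul_inv_sqrt_mul_inv_sqrt hk1k2 (by positivity), one_smul]
  · rw [enhance_dataMatrix, Matrix.mul_assoc]
    exact (rank_mul_le_left _ _).trans ((rank_le_card_width _).trans_eq (Fintype.card_fin r))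

open EMaC in
/-- the enhanced form of the 2-D spectral data matrix admits the
Vandermonde-type factorization
`X_e = √(k1 k2 (n1−k1+1)(n2−k2+1)) · E_L · D · E_R`, and hence has rank at
most `r`. -/
theorem enhanced_matrix_factorization_and_rank
    (n1 n2 r k1 k2 : ℕ) (hn1 : 0 < n1) (hn2 : 0 < n2) (hr : 0 < r)
    (hk1 : 1 ≤ k1) (hk1' : k1 ≤ n1) (hk2 : 1 ≤ k2) (hk2' : k2 ≤ n2)
    (d : Fin r → ℂ) (f1 f2 : Fin r → ℝ)
    (hmodel : SpectralModel r f1 f2) :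
    enhance k1 k2 hk1' hk2' (dataMatrix n1 n2 r d f1 f2) =
      (Real.sqrt (((k1 : ℝ) * k2) *
          (((n1 - k1 + 1 : ℕ) : ℝ) * ((n2 - k2 + 1 : ℕ) : ℝ))) : ℂ) •
        (EL r k1 k2 f1 f2 * Matrix.diagonal d * ER n1 n2 r k1 k2 f1 f2) ∧
    (enhance k1 k2 hk1' hk2' (dataMatrix n1 n2 r d f1 f2)).rank ≤ r :=
  enhanced_matrix_factorization_and_rank_general n1 n2 r k1 k2 hk1 hk1' hk2 hk2' d f1 f2
end
end

section
/- (Lemma 2, first part.) Suppose X ∈ ℂ^{n1×n2} is the data matrix of the 2-D spectral model satisfying the incoherence property with parameter μ1, with enhanced form X_e = U Λ V* (compact SVD). Then for every (k,l) ∈ {0,…,n1−1}×{0,…,n2−1}: ‖U U* A_{(k,l)}‖_F^2 ≤ μ1·c_s·r/(n1 n2) and ‖A_{(k,l)} V V*‖_F^2 ≤ μ1·c_s·r/(n1 n2). -/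
open scoped Classical
open Matrix

noncomputable section

/-!
Write `X_e = E_L D E_R` with `D` diagonal, so the column space of `U` lies in that of `E_L`.
With `G = E_L* E_L` this gives `U* = U* E_L G⁻¹ E_L*`, hence, in the spectral norm,
`‖U U* A‖_F ≤ ‖E_L G⁻¹‖ ‖E_L* A‖_F` with `‖E_L G⁻¹‖² = ‖G⁻¹‖ ≤ μ1` by incoherence.
Each column of `A_{(k,l)}` has one nonzero entry and `‖A_{(k,l)}‖_F ≤ 1`, while the entries of
`E_L` have modulus `1/√(k1 k2)`; so `‖E_L* A_{(k,l)}‖_F² ≤ r/(k1 k2)`.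
The row space is the same argument applied to `X_e* = E_R* D* E_L*`.
-/

namespace EMaC

open scoped Matrix.Norms.L2Operator MatrixOrder ComplexOrder InnerProductSpace

section Frobenius

variable {m n p : Type*} [Fintype m] [Fintype n] [Fintype p]

lemma frob_nonneg (M : Matrix m n ℂ) : 0 ≤ frob M := Real.sqrt_nonneg _

lemma frob_conjTranspose (M : Matrix m n ℂ) : frob Mᴴ = frob M := by
  rw [frob, frob, Finset.sum_comm]
  simp

lemma frob_sq_eq_sum_norm_sq_col (M : Matrix m n ℂ) :
    frob M ^ 2 = ∑ j, ‖(WithLp.toLp 2 (Mᵀ j) : EuclideanSpace ℂ m)‖ ^ 2 := by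
  rw [frob, Real.sq_sqrt (by positivity), Finset.sum_comm]
  simp [EuclideanSpace.norm_sq_eq]

lemma frob_mul_le (A : Matrix m n ℂ) (M : Matrix n p ℂ) : frob (A * M) ≤ ‖A‖ * frob M := by
  have hcol (j : p) : ‖(WithLp.toLp 2 ((A * M)ᵀ j) : EuclideanSpace ℂ m)‖ ^ 2 ≤
      ‖A‖ ^ 2 * ‖(WithLp.toLp 2 (Mᵀ j) : EuclideanSpace ℂ n)‖ ^ 2 := by
    rw [← mul_pow]
    gcongr
    exact A.l2_opNorm_mulVec (WithLp.toLp 2 (Mᵀ j))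
  refine (pow_le_pow_iff_left₀ (frob_nonneg _) (by positivity [frob_nonneg M]) two_ne_zero).mp ?_
  rw [mul_pow, frob_sq_eq_sum_norm_sq_col, frob_sq_eq_sum_norm_sq_col, Finset.mul_sum]
  exact Finset.sum_le_sum fun j _ => hcol j

lemma norm_sum_sq_le_of_subsingleton {E : Type*} [SeminormedAddCommGroup E] (g : m → E)
    (hg : {i | g i ≠ 0}.Subsingleton) :
    ‖∑ i, g i‖ ^ 2 ≤ ∑ i, ‖g i‖ ^ 2 := by
  by_cases h : ∃ i, g i ≠ 0
  · obtain ⟨i, hi⟩ := h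
    rw [Finset.sum_eq_single i (fun j _ hj => not_not.mp fun hgj => hj (hg hgj hi)) (by simp)]
    exact Finset.single_le_sum (f := fun j => ‖g j‖ ^ 2) (fun _ _ => sq_nonneg _)
      (Finset.mem_univ i)
  · simp only [ne_eq, not_exists, not_not] at h
    simp [h]

lemma frob_mul_sq_le_of_subsingleton {F : Matrix p m ℂ} {B : Matrix m n ℂ} {β : ℝ}
    (hF : ∀ s i, ‖F s i‖ ^ 2 ≤ β) (hB : ∀ j, {i | B i j ≠ 0}.Subsingleton) :
    frob (F * B) ^ 2 ≤ Fintype.card p * (β * frob B ^ 2) := by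
  have hentry (s : p) (j : n) : ‖(F * B) s j‖ ^ 2 ≤ β * ∑ i, ‖B i j‖ ^ 2 := by
    rw [mul_apply, Finset.mul_sum]
    refine (norm_sum_sq_le_of_subsingleton _ fun i hi i' hi' =>
      hB j (right_ne_zero_of_mul hi) (right_ne_zero_of_mul hi')).trans
      (Finset.sum_le_sum fun i _ => ?_)
    rw [norm_mul, mul_pow]
    exact mul_le_mul_of_nonneg_right (hF s i) (sq_nonneg _)
  rw [frob, frob, Real.sq_sqrt (by positivity), Real.sq_sqrt (by positivity), Finset.sum_comm]
  calc ∑ j, ∑ s, ‖(F * B) s j‖ ^ 2 ≤ ∑ j, ∑ _s : p, β * ∑ i, ‖B i j‖ ^ 2 :=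
        Finset.sum_le_sum fun j _ => Finset.sum_le_sum fun s _ => hentry s j
    _ = Fintype.card p * (β * ∑ i, ∑ j, ‖B i j‖ ^ 2) := by
        simp only [Finset.sum_const, Finset.card_univ, nsmul_eq_mul, ← Finset.mul_sum]
        rw [Finset.sum_comm]

lemma l2_opNorm_le_one_of_conjTranspose_mul_self_eq_one [DecidableEq n] {U : Matrix m n ℂ}
    (hU : Uᴴ * U = 1) : ‖U‖ ≤ 1 := by
  have h : ‖U‖ * ‖U‖ ≤ 1 := by
    rw [← l2_opNorm_conjTranspose_mul_self, hU, ← diagonal_one, l2_opNorm_diagonal]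
    exact (pi_norm_le_iff_of_nonneg zero_le_one).mpr fun _ => by simp
  nlinarith [norm_nonneg U]

end Frobenius

section SigmaMin

variable {n : Type*} [Fintype n] [DecidableEq n]

lemma sigmaMin_transpose (G : Matrix n n ℂ) : sigmaMin Gᵀ = sigmaMin Gᴴ := by
  have h : (Gᵀ)ᴴ * Gᵀ = ((Gᴴ)ᴴ * Gᴴ)ᵀ := by
    ext; simp [mul_apply, mul_comm]
  have := ((isHermitian_conjTranspose_mul_self Gᵀ).eigenvalues_eq_eigenvalues_iff
    (isHermitian_conjTranspose_mul_self Gᴴ)).mpr (by rw [h, charpoly_transpose])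
  simp only [sigmaMin, this]

lemma algebraMap_sq_le_conjTranspose_mul_self {G : Matrix n n ℂ} {c : ℝ} (hc : 0 ≤ c)
    (h : c ≤ sigmaMin G) : algebraMap ℝ (Matrix n n ℂ) (c ^ 2) ≤ Gᴴ * G := by
  have hH := isHermitian_conjTranspose_mul_self G
  rw [algebraMap_le_iff_le_spectrum (a := Gᴴ * G) hH.isSelfAdjoint,
    hH.spectrum_real_eq_range_eigenvalues]
  rintro _ ⟨i, rfl⟩
  have h1 : c ≤ √(hH.eigenvalues i) := h.trans (ciInf_le (Set.finite_range _).bddBelow i)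
  calc c ^ 2 ≤ √(hH.eigenvalues i) ^ 2 := pow_le_pow_left₀ hc h1 2
    _ = hH.eigenvalues i := Real.sq_sqrt (eigenvalues_conjTranspose_mul_self_nonneg G i)

lemma mul_norm_le_norm_toEuclideanCLM_of_le_sigmaMin {G : Matrix n n ℂ} {c : ℝ} (hc : 0 ≤ c)
    (h : c ≤ sigmaMin G) (x : EuclideanSpace ℂ n) :
    c * ‖x‖ ≤ ‖toEuclideanCLM (𝕜 := ℂ) G x‖ := by
  have hsq : c ^ 2 * ‖x‖ ^ 2 ≤ ‖toEuclideanCLM (𝕜 := ℂ) G x‖ ^ 2 := by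
    have hpos := le_iff.mp (algebraMap_sq_le_conjTranspose_mul_self hc h)
    have := (isPositive_toEuclideanLin_iff.mpr hpos).re_inner_nonneg_left x
    rw [← coe_toEuclideanCLM_eq_toEuclideanLin] at this
    simpa only [IsScalarTower.algebraMap_apply ℝ ℂ (Matrix n n ℂ),
      Algebra.algebraMap_eq_smul_one (A := Matrix n n ℂ), map_sub, map_smul, map_one, map_mul,
      ← star_eq_conjTranspose, map_star, ContinuousLinearMap.star_eq_adjoint,
      ContinuousLinearMap.toLinearMap_sub, ContinuousLinearMap.toLinearMap_mul,
      ContinuousLinearMap.toLinearMap_smul, ContinuousLinearMap.toLinearMap_one,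
      LinearMap.sub_apply, LinearMap.smul_apply, Module.End.mul_apply, Module.End.one_apply,
      ContinuousLinearMap.coe_coe, inner_sub_left, inner_smul_left,
      ContinuousLinearMap.adjoint_inner_left, inner_self_eq_norm_sq_to_K, Complex.coe_algebraMap,
      ← Complex.ofReal_pow, Complex.conj_ofReal, ← Complex.ofReal_mul, RCLike.re_to_complex,
      Complex.ofReal_re, sub_nonneg] using this
  exact (pow_le_pow_iff_left₀ (by positivity) (norm_nonneg _) two_ne_zero).mp (by rwa [mul_pow])

lemma isUnit_det_of_mul_norm_le {G : Matrix n n ℂ} {c : ℝ} (hc : 0 < c)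
    (h : ∀ x, c * ‖x‖ ≤ ‖toEuclideanCLM (𝕜 := ℂ) G x‖) : IsUnit G.det := by
  rw [isUnit_iff_ne_zero, Ne, ← exists_mulVec_eq_zero_iff]
  rintro ⟨v, hv0, hv⟩
  have := h (WithLp.toLp 2 v)
  rw [toEuclideanCLM_toLp, hv, WithLp.toLp_zero, norm_zero] at this
  exact hv0 (by simpa using nonpos_of_mul_nonpos_right this hc)

lemma l2_opNorm_nonsing_inv_le {G : Matrix n n ℂ} {c : ℝ} (hc : 0 < c)
    (h : ∀ x, c * ‖x‖ ≤ ‖toEuclideanCLM (𝕜 := ℂ) G x‖) : ‖G⁻¹‖ ≤ c⁻¹ := by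
  rw [cstar_norm_def]
  refine ContinuousLinearMap.opNorm_le_bound _ (inv_nonneg.mpr hc.le) fun x => ?_
  have := h (toEuclideanCLM (𝕜 := ℂ) G⁻¹ x)
  rw [← mul_apply_eq_comp, ← map_mul, mul_nonsing_inv _ (isUnit_det_of_mul_norm_le hc h),
    map_one, one_apply_eq_self] at this
  rwa [inv_mul_eq_div, le_div_iff₀' hc]

end SigmaMin

section Projection

variable {m k l p : Type*} [Fintype m] [Fintype k] [Fintype l] [Fintype p]
  [DecidableEq m] [DecidableEq k] [DecidableEq l]

lemma frob_mul_conjTranspose_mul_sq_le {E : Matrix m k ℂ} {U : Matrix m l ℂ}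
    {C : Matrix k l ℂ} (hU : Uᴴ * U = 1) (hUE : U = E * C) (hG : IsUnit (Eᴴ * E).det)
    (M : Matrix m p ℂ) :
    frob (U * Uᴴ * M) ^ 2 ≤ ‖(Eᴴ * E)⁻¹‖ * frob (Eᴴ * M) ^ 2 := by
  set G := Eᴴ * E
  have hGinv : (G⁻¹)ᴴ = G⁻¹ := (isHermitian_conjTranspose_mul_self E).inv.eq
  have hproj : Uᴴ * (E * G⁻¹) * Eᴴ = Uᴴ := by
    rw [hUE, conjTranspose_mul, Matrix.mul_assoc, Matrix.mul_assoc, ← Matrix.mul_assoc Eᴴ,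
      ← Matrix.mul_assoc Eᴴ, mul_nonsing_inv _ hG, Matrix.one_mul]
  have hnorm : ‖E * G⁻¹‖ ^ 2 = ‖G⁻¹‖ := by
    rw [sq, ← l2_opNorm_conjTranspose_mul_self, conjTranspose_mul, hGinv, Matrix.mul_assoc,
      ← Matrix.mul_assoc Eᴴ, mul_nonsing_inv _ hG, Matrix.mul_one]
  have hU1 := l2_opNorm_le_one_of_conjTranspose_mul_self_eq_one hU
  have hUH1 : ‖Uᴴ‖ ≤ 1 := (l2_opNorm_conjTranspose U).le.trans hU1
  have hmain : frob (U * Uᴴ * M) ≤ ‖E * G⁻¹‖ * frob (Eᴴ * M) :=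
    calc frob (U * Uᴴ * M) ≤ ‖U‖ * frob (Uᴴ * M) := by
          rw [Matrix.mul_assoc]; exact frob_mul_le _ _
      _ ≤ frob (Uᴴ * M) := mul_le_of_le_one_left (frob_nonneg _) hU1
      _ = frob (Uᴴ * (E * G⁻¹) * (Eᴴ * M)) := by rw [← Matrix.mul_assoc, hproj]
      _ ≤ ‖Uᴴ * (E * G⁻¹)‖ * frob (Eᴴ * M) := frob_mul_le _ _
      _ ≤ ‖E * G⁻¹‖ * frob (Eᴴ * M) := mul_le_mul_of_nonneg_right
          ((l2_opNorm_mul _ _).trans (mul_le_of_le_one_left (norm_nonneg _) hUH1)) (frob_nonneg _)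
  calc frob (U * Uᴴ * M) ^ 2 ≤ (‖E * G⁻¹‖ * frob (Eᴴ * M)) ^ 2 := by
        gcongr; exact frob_nonneg _
    _ = ‖G⁻¹‖ * frob (Eᴴ * M) ^ 2 := by rw [mul_pow, hnorm]

lemma frob_mul_conjTranspose_mul_sq_le_of_le_sigmaMin {E : Matrix m k ℂ} {U : Matrix m l ℂ}
    {μ β : ℝ} (hμ : 0 < μ) (hE : 1 / μ ≤ sigmaMin (Eᴴ * E)) (hEβ : ∀ i s, ‖E i s‖ ^ 2 ≤ β)
    (hU : Uᴴ * U = 1) (hUE : ∃ C : Matrix k l ℂ, U = E * C) {B : Matrix m p ℂ}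
    (hB : ∀ j, {i | B i j ≠ 0}.Subsingleton) :
    frob (U * Uᴴ * B) ^ 2 ≤ μ * (Fintype.card k * (β * frob B ^ 2)) := by
  obtain ⟨C, hUE⟩ := hUE
  have hbelow := mul_norm_le_norm_toEuclideanCLM_of_le_sigmaMin (by positivity) hE
  have hinv : ‖(Eᴴ * E)⁻¹‖ ≤ μ := by
    simpa using l2_opNorm_nonsing_inv_le (by positivity) hbelow
  calc frob (U * Uᴴ * B) ^ 2 ≤ ‖(Eᴴ * E)⁻¹‖ * frob (Eᴴ * B) ^ 2 :=
        frob_mul_conjTranspose_mul_sq_le hU hUE (isUnit_det_of_mul_norm_le (by positivity) hbelow) B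
    _ ≤ μ * (Fintype.card k * (β * frob B ^ 2)) := by
        gcongr
        exact frob_mul_sq_le_of_subsingleton (fun s i => by simpa using hEβ i s) hB

end Projection

namespace CompactSVD

variable {p q : Type*} [Fintype p] [Fintype q] {r' : ℕ} {Xe : Matrix p q ℂ}
  {U : Matrix p (Fin r') ℂ} {σ : Fin r' → ℝ} {V : Matrix q (Fin r') ℂ}

lemma conjTranspose (h : CompactSVD Xe U σ V) : CompactSVD Xeᴴ V σ U where
  U_orth := h.V_orth
  V_orth := h.U_orth
  sigma_pos := h.sigma_pos
  decomp := by
    rw [h.decomp, conjTranspose_mul, conjTranspose_mul, conjTranspose_conjTranspose,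
      diagonal_conjTranspose, Matrix.mul_assoc]
    congr 3
    ext i
    simp

lemma eq_mul_mul_diagonal_inv (h : CompactSVD Xe U σ V) :
    U = Xe * V * diagonal (fun i => ((σ i : ℂ))⁻¹) := by
  have hσ : diagonal (fun i => (σ i : ℂ)) * diagonal (fun i => ((σ i : ℂ))⁻¹) = 1 := by
    rw [diagonal_mul_diagonal, ← diagonal_one]
    congr; ext i
    exact mul_inv_cancel₀ (Complex.ofReal_ne_zero.mpr (h.sigma_pos i).ne')
  rw [h.decomp, Matrix.mul_assoc _ Vᴴ V, h.V_orth, Matrix.mul_one, Matrix.mul_assoc, hσ,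
    Matrix.mul_one]

variable {s : Type*} [Fintype s] {A : Matrix p s ℂ} {B : Matrix s q ℂ}

lemma exists_left_eq_mul (h : CompactSVD (A * B) U σ V) :
    ∃ C : Matrix s (Fin r') ℂ, U = A * C :=
  ⟨_, by rw [h.eq_mul_mul_diagonal_inv, Matrix.mul_assoc, Matrix.mul_assoc]⟩

lemma exists_right_eq_conjTranspose_mul (h : CompactSVD (A * B) U σ V) :
    ∃ C : Matrix s (Fin r') ℂ, V = Bᴴ * C := by
  have h' := h.conjTranspose
  rw [conjTranspose_mul] at h'
  exact h'.exists_left_eq_mul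

end CompactSVD

lemma norm_efreq (f : ℝ) : ‖efreq f‖ = 1 := by
  rw [efreq, show 2 * (Real.pi : ℂ) * Complex.I * f = ((2 * Real.pi * f : ℝ) : ℂ) * Complex.I
    by push_cast; ring]
  exact Complex.norm_exp_ofReal_mul_I _

lemma norm_EL_sq (r k1 k2 : ℕ) (f1 f2 : Fin r → ℝ) (ip : Fin k1 × Fin k2) (s : Fin r) :
    ‖EL r k1 k2 f1 f2 ip s‖ ^ 2 = ((k1 : ℝ) * k2)⁻¹ := by
  simp only [EL, of_apply, norm_div, norm_mul, norm_pow, norm_efreq, one_pow, one_mul,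
    Complex.norm_real, Real.norm_of_nonneg (Real.sqrt_nonneg _), one_div, inv_pow]
  rw [Real.sq_sqrt (by positivity)]

lemma norm_ER_sq (n1 n2 r k1 k2 : ℕ) (f1 f2 : Fin r → ℝ) (s : Fin r)
    (jq : Fin (n1 - k1 + 1) × Fin (n2 - k2 + 1)) :
    ‖ER n1 n2 r k1 k2 f1 f2 s jq‖ ^ 2 =
      (((n1 - k1 + 1 : ℕ) : ℝ) * ((n2 - k2 + 1 : ℕ) : ℝ))⁻¹ := by
  simp only [ER, of_apply, norm_div, norm_mul, norm_pow, norm_efreq, one_pow, one_mul,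
    Complex.norm_real, Real.norm_of_nonneg (Real.sqrt_nonneg _), one_div, inv_pow]
  rw [Real.sq_sqrt (by positivity)]

lemma enhance_dataMatrix_eq (n1 n2 r k1 k2 : ℕ) (hk1 : 1 ≤ k1) (hk1' : k1 ≤ n1) (hk2 : 1 ≤ k2)
    (hk2' : k2 ≤ n2) (d : Fin r → ℂ) (f1 f2 : Fin r → ℝ) :
    enhance k1 k2 hk1' hk2' (dataMatrix n1 n2 r d f1 f2) =
      EL r k1 k2 f1 f2 * diagonal (fun s => (√((k1 : ℝ) * k2) : ℂ) *
        (√(((n1 - k1 + 1 : ℕ) : ℝ) * ((n2 - k2 + 1 : ℕ) : ℝ)) : ℂ) * d s) *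
        ER n1 n2 r k1 k2 f1 f2 := by
  have hK : (√((k1 : ℝ) * k2) : ℂ) ≠ 0 := by
    norm_cast; positivity
  have hN : (√(((n1 - k1 + 1 : ℕ) : ℝ) * ((n2 - k2 + 1 : ℕ) : ℝ)) : ℂ) ≠ 0 := by
    norm_cast; positivity
  ext ip jq
  rw [mul_apply]
  simp only [enhance, dataMatrix, EL, ER, of_apply, mul_diagonal, pow_add]
  refine Finset.sum_congr rfl fun s _ => ?_
  field_simp

lemma Incoherent.one_div_le_sigmaMin_ER {n1 n2 r k1 k2 : ℕ} {f1 f2 : Fin r → ℝ} {μ1 : ℝ}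
    (h : Incoherent n1 n2 r k1 k2 f1 f2 μ1) :
    1 / μ1 ≤ sigmaMin ((ER n1 n2 r k1 k2 f1 f2)ᴴᴴ * (ER n1 n2 r k1 k2 f1 f2)ᴴ) := by
  have h2 := h.2
  rw [sigmaMin_transpose, (isHermitian_mul_conjTranspose_self _).eq] at h2
  rwa [conjTranspose_conjTranspose]

section Amat

variable {n1 n2 k1 k2 : ℕ}

lemma Amat_apply_ne_zero {a : Fin n1 × Fin n2} {ip : Fin k1 × Fin k2}
    {jq : Fin (n1 - k1 + 1) × Fin (n2 - k2 + 1)} (h : Amat n1 n2 k1 k2 a ip jq ≠ 0) :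
    ip.1.1 + jq.1.1 = a.1 ∧ ip.2.1 + jq.2.1 = a.2 := by
  by_contra hc
  exact h (by simp [Amat, hc])

lemma Amat_col_subsingleton (a : Fin n1 × Fin n2) (jq : Fin (n1 - k1 + 1) × Fin (n2 - k2 + 1)) :
    {ip | Amat n1 n2 k1 k2 a ip jq ≠ 0}.Subsingleton := by
  intro ip hip ip' hip'
  obtain ⟨h1, h2⟩ := Amat_apply_ne_zero hip
  obtain ⟨h1', h2'⟩ := Amat_apply_ne_zero hip'
  ext <;> omega

lemma Amat_row_subsingleton (a : Fin n1 × Fin n2) (ip : Fin k1 × Fin k2) :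
    {jq | Amat n1 n2 k1 k2 a ip jq ≠ 0}.Subsingleton := by
  intro jq hjq jq' hjq'
  obtain ⟨h1, h2⟩ := Amat_apply_ne_zero hjq
  obtain ⟨h1', h2'⟩ := Amat_apply_ne_zero hjq'
  ext <;> omega

lemma frob_Amat_sq_le_one (a : Fin n1 × Fin n2) : frob (Amat n1 n2 k1 k2 a) ^ 2 ≤ 1 := by
  rw [frob, Real.sq_sqrt (by positivity), ← Fintype.sum_prod_type']
  simp only [Amat, of_apply, apply_ite (‖·‖ ^ 2), norm_zero, Complex.norm_real, norm_inv,
    Real.norm_of_nonneg (Real.sqrt_nonneg _), inv_pow, Real.sq_sqrt (Nat.cast_nonneg _),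
    zero_pow two_ne_zero]
  rw [← Finset.sum_filter, Finset.sum_const, nsmul_eq_mul, ← wcount]
  exact mul_inv_le_one

end Amat

lemma mul_mul_inv_mul_le_of_div_le {μ r x N c t : ℝ} (hμ : 0 ≤ μ) (hr : 0 ≤ r) (hx : 0 ≤ x)
    (hN : 0 < N) (ht : t ≤ 1) (hc : N / x ≤ c) : μ * (r * (x⁻¹ * t)) ≤ μ * c * r / N := by
  calc μ * (r * (x⁻¹ * t)) ≤ μ * (r * x⁻¹) := by
        gcongr; exact mul_le_of_le_one_right (inv_nonneg.mpr hx) ht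
    _ = μ * (N / x) * r / N := by field_simp
    _ ≤ μ * c * r / N := by gcongr

end EMaC

open EMaC in
theorem incoherence_basis_projection_bounds_general
    (n1 n2 r r' k1 k2 : ℕ) (hn1 : 0 < n1) (hn2 : 0 < n2)
    (hk1 : 1 ≤ k1) (hk1' : k1 ≤ n1) (hk2 : 1 ≤ k2) (hk2' : k2 ≤ n2)
    (d : Fin r → ℂ) (f1 f2 : Fin r → ℝ)
    (μ1 : ℝ) (hμ1 : 0 < μ1)
    (hinc : Incoherent n1 n2 r k1 k2 f1 f2 μ1)
    (U : Matrix (Fin k1 × Fin k2) (Fin r') ℂ) (σ : Fin r' → ℝ)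
    (V : Matrix (Fin (n1 - k1 + 1) × Fin (n2 - k2 + 1)) (Fin r') ℂ)
    (hsvd : CompactSVD (enhance k1 k2 hk1' hk2' (dataMatrix n1 n2 r d f1 f2)) U σ V) :
    ∀ a : Fin n1 × Fin n2,
      frob (U * Uᴴ * Amat n1 n2 k1 k2 a) ^ 2 ≤
          μ1 * cs n1 n2 k1 k2 * r / ((n1 : ℝ) * n2) ∧
        frob (Amat n1 n2 k1 k2 a * (V * Vᴴ)) ^ 2 ≤
          μ1 * cs n1 n2 k1 k2 * r / ((n1 : ℝ) * n2) := by
  intro a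
  have hsvd' := hsvd
  rw [enhance_dataMatrix_eq n1 n2 r k1 k2 hk1 hk1' hk2 hk2' d f1 f2] at hsvd'
  have hV := hsvd'.exists_right_eq_conjTranspose_mul
  rw [Matrix.mul_assoc] at hsvd'
  have hcol := frob_mul_conjTranspose_mul_sq_le_of_le_sigmaMin hμ1 hinc.1
    (fun ip s => (norm_EL_sq r k1 k2 f1 f2 ip s).le) hsvd.U_orth hsvd'.exists_left_eq_mul
    (Amat_col_subsingleton a)
  have hrow := frob_mul_conjTranspose_mul_sq_le_of_le_sigmaMin hμ1 hinc.one_div_le_sigmaMin_ER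
    (fun jq s => by rw [conjTranspose_apply, norm_star, norm_ER_sq]) hsvd.V_orth hV
    (B := (Amat n1 n2 k1 k2 a)ᴴ) (fun ip => by simpa using Amat_row_subsingleton a ip)
  rw [Fintype.card_fin] at hcol hrow
  rw [frob_conjTranspose] at hrow
  rw [← frob_conjTranspose (_ * (V * Vᴴ)), conjTranspose_mul, conjTranspose_mul,
    conjTranspose_conjTranspose]
  have hn : (0 : ℝ) < n1 * n2 := by positivity
  exact ⟨hcol.trans (mul_mul_inv_mul_le_of_div_le hμ1.le (Nat.cast_nonneg r) (by positivity) hn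
      (frob_Amat_sq_le_one a) (le_max_left _ _)),
    hrow.trans (mul_mul_inv_mul_le_of_div_le hμ1.le (Nat.cast_nonneg r) (by positivity) hn
      (frob_Amat_sq_le_one a) (le_max_right _ _))⟩

open EMaC in
/-- Lemma 2, first part: under the incoherence property, the
projections of each basis matrix `A_{(k,l)}` onto the column and row spaces of
`X_e` satisfy `‖U U* A_{(k,l)}‖_F² ≤ μ1 c_s r/(n1 n2)` and
`‖A_{(k,l)} V V*‖_F² ≤ μ1 c_s r/(n1 n2)`. -/
theorem incoherence_basis_projection_bounds
    (n1 n2 r r' k1 k2 : ℕ) (hn1 : 0 < n1) (hn2 : 0 < n2) (hr : 0 < r)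
    (hk1 : 1 ≤ k1) (hk1' : k1 ≤ n1) (hk2 : 1 ≤ k2) (hk2' : k2 ≤ n2)
    (d : Fin r → ℂ) (f1 f2 : Fin r → ℝ)
    (hmodel : SpectralModel r f1 f2)
    (μ1 : ℝ) (hμ1 : 0 < μ1)
    (hinc : Incoherent n1 n2 r k1 k2 f1 f2 μ1)
    (U : Matrix (Fin k1 × Fin k2) (Fin r') ℂ) (σ : Fin r' → ℝ)
    (V : Matrix (Fin (n1 - k1 + 1) × Fin (n2 - k2 + 1)) (Fin r') ℂ)
    (hsvd : CompactSVD (enhance k1 k2 hk1' hk2' (dataMatrix n1 n2 r d f1 f2)) U σ V) :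
    ∀ a : Fin n1 × Fin n2,
      frob (U * Uᴴ * Amat n1 n2 k1 k2 a) ^ 2 ≤
          μ1 * cs n1 n2 k1 k2 * r / ((n1 : ℝ) * n2) ∧
        frob (Amat n1 n2 k1 k2 a * (V * Vᴴ)) ^ 2 ≤
          μ1 * cs n1 n2 k1 k2 * r / ((n1 : ℝ) * n2) :=
  incoherence_basis_projection_bounds_general n1 n2 r r' k1 k2 hn1 hn2 hk1 hk1' hk2 hk2' d f1 f2 μ1
    hμ1 hinc U σ V hsvd
end
end
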